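/- arXiv:2408.04247 — 2 statements merged into one kernel-verified Lean document; each statement's English description precedes it below -/
import Mathlib

section
/- There is an absolute constant C > 0 such that for every N ∈ ℕ and all complex numbers a_1, …, a_N and b_1, …, b_N, one has | Σ_{m,n ≤ N, m ≠ n} a_m \overline{b_n} / (m − n) | ≤ C ( Σ_{n ≤ N} |a_n|² )^{1/2} ( Σ_{n ≤ N} |b_n|² )^{1/2}. -/
/-!
Write `e_r(x) = exp(2πirx)`. Integrating by parts, `∫₀¹ (x - 1/2) e_r(x) dx = 1/(2πir)` for
`r ≠ 0` and `0` for `r = 0`, so the bilinear form equals `2πi ∫₀¹ (x - 1/2) f(x) conj(g(x)) dx`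
with `f = Σ a_m e_m` and `g = Σ b_n e_n`. As `|x - 1/2| ≤ 1/2` on `[0, 1]`, Cauchy–Schwarz and
Parseval bound this by `π ‖a‖₂ ‖b‖₂`.
-/

open Complex Finset MeasureTheory Real
open scoped ComplexConjugate

noncomputable def fourierExp (r : ℤ) (x : ℝ) : ℂ := exp (2 * π * I * r * x)

lemma continuous_fourierExp (r : ℤ) : Continuous (fourierExp r) := by
  unfold fourierExp; fun_prop

lemma hasDerivAt_fourierExp (r : ℤ) (x : ℝ) :
    HasDerivAt (fourierExp r) (2 * π * I * r * fourierExp r x) x := by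
  have h := ((hasDerivAt_id (x : ℂ)).const_mul (2 * π * I * r)).cexp.comp_ofReal
  simp only [mul_one, id, mul_comm (cexp _)] at h
  exact h

lemma hasDerivAt_fourierExp_div {r : ℤ} (hr : r ≠ 0) (x : ℝ) :
    HasDerivAt (fun y ↦ fourierExp r y / (2 * π * I * r)) (fourierExp r x) x := by
  have hc : (2 * π * I * r : ℂ) ≠ 0 := by simp [pi_ne_zero, I_ne_zero, hr]
  simpa [hc] using (hasDerivAt_fourierExp r x).div_const (2 * π * I * r)

lemma fourierExp_zero_right (r : ℤ) : fourierExp r 0 = 1 := by simp [fourierExp]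

lemma fourierExp_one_right (r : ℤ) : fourierExp r 1 = 1 := by
  simpa [fourierExp, mul_comm, mul_assoc, mul_left_comm] using exp_int_mul_two_pi_mul_I r

lemma fourierExp_mul_conj (m n : ℤ) (x : ℝ) :
    fourierExp m x * conj (fourierExp n x) = fourierExp (m - n) x := by
  simp only [fourierExp, ← exp_conj, ← Complex.exp_add, map_mul, conj_I, conj_ofReal, map_ofNat,
    map_intCast, Int.cast_sub]
  ring_nf

lemma integral_fourierExp (r : ℤ) :
    ∫ x in (0 : ℝ)..1, fourierExp r x = if r = 0 then 1 else 0 := by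
  split_ifs with hr
  · simp [fourierExp, hr]
  rw [intervalIntegral.integral_eq_sub_of_hasDerivAt (fun x _ ↦ hasDerivAt_fourierExp_div hr x)
    ((continuous_fourierExp r).intervalIntegrable 0 1)]
  simp [fourierExp_zero_right, fourierExp_one_right]

lemma integral_sawtooth_mul_fourierExp (r : ℤ) :
    ∫ x in (0 : ℝ)..1, ((x : ℂ) - 1 / 2) * fourierExp r x =
      if r = 0 then 0 else (2 * π * I * r)⁻¹ := by
  split_ifs with hr
  · simp only [fourierExp, hr, Int.cast_zero, mul_zero, zero_mul, Complex.exp_zero, mul_one]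
    rw [intervalIntegral.integral_sub (continuous_ofReal.intervalIntegrable 0 1)
      intervalIntegrable_const, intervalIntegral.integral_ofReal]
    simp
  have hu (x : ℝ) : HasDerivAt (fun y : ℝ ↦ (y : ℂ) - 1 / 2) 1 x :=
    (hasDerivAt_id x).ofReal_comp.sub_const _
  rw [intervalIntegral.integral_mul_deriv_eq_deriv_mul (fun x _ ↦ hu x)
    (fun x _ ↦ hasDerivAt_fourierExp_div hr x)
    intervalIntegrable_const ((continuous_fourierExp r).intervalIntegrable 0 1)]
  simp only [one_mul, intervalIntegral.integral_div, integral_fourierExp, if_neg hr,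
    fourierExp_zero_right, fourierExp_one_right]
  push_cast
  ring

noncomputable def trigPoly (s : Finset ℕ) (c : ℕ → ℂ) (x : ℝ) : ℂ :=
  ∑ n ∈ s, c n * fourierExp n x

lemma continuous_trigPoly (s : Finset ℕ) (c : ℕ → ℂ) : Continuous (trigPoly s c) :=
  continuous_finsetSum s fun n _ ↦ continuous_const.mul (continuous_fourierExp n)

lemma trigPoly_mul_conj (s : Finset ℕ) (a b : ℕ → ℂ) (x : ℝ) :
    trigPoly s a x * conj (trigPoly s b x) =
      ∑ m ∈ s, ∑ n ∈ s, a m * conj (b n) * fourierExp (m - n) x := by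
  simp only [trigPoly, map_sum, sum_mul_sum, map_mul, ← fourierExp_mul_conj]
  exact sum_congr rfl fun m _ ↦ sum_congr rfl fun n _ ↦ by ring

lemma integral_mul_trigPoly_mul_conj (s : Finset ℕ) (a b : ℕ → ℂ) {F : ℝ → ℂ}
    (hF : IntervalIntegrable F volume 0 1) :
    ∫ x in (0 : ℝ)..1, F x * (trigPoly s a x * conj (trigPoly s b x)) =
      ∑ m ∈ s, ∑ n ∈ s, a m * conj (b n) * ∫ x in (0 : ℝ)..1, F x * fourierExp (m - n) x := by
  have hint (r : ℤ) (c : ℂ) :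
      IntervalIntegrable (fun x ↦ F x * (c * fourierExp r x)) volume 0 1 := by
    simpa only [mul_left_comm (F _)] using
      (hF.mul_continuousOn (continuous_fourierExp r).continuousOn).const_mul c
  simp only [trigPoly_mul_conj, ← sum_product', mul_sum]
  rw [intervalIntegral.integral_finsetSum fun p _ ↦ hint _ _]
  refine sum_congr rfl fun p _ ↦ ?_
  simp only [mul_left_comm (F _), intervalIntegral.integral_const_mul]

lemma integral_trigPoly_mul_conj (s : Finset ℕ) (a b : ℕ → ℂ) :
    ∫ x in (0 : ℝ)..1, trigPoly s a x * conj (trigPoly s b x) = ∑ m ∈ s, a m * conj (b m) := by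
  have h := integral_mul_trigPoly_mul_conj s a b (F := fun _ ↦ 1) intervalIntegrable_const
  simp only [one_mul, integral_fourierExp, sub_eq_zero, Nat.cast_inj, mul_ite, mul_one,
    mul_zero, sum_ite_eq] at h
  simpa using h

lemma integral_norm_sq_trigPoly (s : Finset ℕ) (c : ℕ → ℂ) :
    ∫ x in (0 : ℝ)..1, ‖trigPoly s c x‖ ^ 2 = ∑ n ∈ s, ‖c n‖ ^ 2 := by
  have h := integral_trigPoly_mul_conj s c c
  simp only [mul_conj, normSq_eq_norm_sq, intervalIntegral.integral_ofReal] at h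
  exact_mod_cast h

noncomputable def hilbertForm (s : Finset ℕ) (a b : ℕ → ℂ) : ℂ :=
  ∑ m ∈ s, ∑ n ∈ s, if m ≠ n then a m * conj (b n) / ((m : ℂ) - (n : ℂ)) else 0

lemma hilbertForm_eq_integral (s : Finset ℕ) (a b : ℕ → ℂ) :
    hilbertForm s a b = 2 * π * I *
      ∫ x in (0 : ℝ)..1, ((x : ℂ) - 1 / 2) * (trigPoly s a x * conj (trigPoly s b x)) := by
  have hF : IntervalIntegrable (fun x : ℝ ↦ (x : ℂ) - 1 / 2) volume 0 1 :=
    (continuous_ofReal.sub continuous_const).intervalIntegrable 0 1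
  rw [integral_mul_trigPoly_mul_conj s a b hF, hilbertForm, mul_sum]
  refine sum_congr rfl fun m _ ↦ ?_
  rw [mul_sum]
  refine sum_congr rfl fun n _ ↦ ?_
  simp only [integral_sawtooth_mul_fourierExp, sub_eq_zero, Nat.cast_inj, ne_eq, ite_not]
  split_ifs with hmn
  · simp
  · have hmn' : (m : ℂ) - n ≠ 0 := sub_ne_zero.mpr (Nat.cast_injective.ne hmn)
    have h2pi : (2 * π * I : ℂ) ≠ 0 := by simp [pi_ne_zero, I_ne_zero]
    push_cast
    field_simp

lemma Continuous.memLp_restrict_Ioc {E : Type*} [NormedAddCommGroup E] {f : ℝ → E}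
    (hf : Continuous f) (p : ENNReal) (a b : ℝ) : MemLp f p (volume.restrict (Set.Ioc a b)) := by
  obtain ⟨C, hC⟩ := (isCompact_Icc (a := a) (b := b)).exists_bound_of_continuousOn hf.continuousOn
  refine (memLp_top_of_bound hf.aestronglyMeasurable C ?_).mono_exponent le_top
  exact ae_restrict_of_forall_mem measurableSet_Ioc fun x hx ↦ hC x (Set.Ioc_subset_Icc_self hx)

lemma norm_integral_sawtooth_mul_le {f g : ℝ → ℂ} (hf : Continuous f) (hg : Continuous g) :
    ‖∫ x in (0 : ℝ)..1, ((x : ℂ) - 1 / 2) * (f x * conj (g x))‖ ≤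
      1 / 2 * (∫ x in (0 : ℝ)..1, ‖f x‖ ^ 2) ^ ((1 : ℝ) / 2) *
        (∫ x in (0 : ℝ)..1, ‖g x‖ ^ 2) ^ ((1 : ℝ) / 2) := by
  have hsaw (x : ℝ) (hx : x ∈ Set.Icc (0 : ℝ) 1) : ‖(x : ℂ) - 1 / 2‖ ≤ 1 / 2 := by
    rw [show (x : ℂ) - 1 / 2 = ((x - 1 / 2 : ℝ) : ℂ) by push_cast; ring, norm_real, norm_eq_abs,
      abs_le]
    constructor <;> linarith [hx.1, hx.2]
  have hholder := integral_mul_norm_le_Lp_mul_Lq HolderConjugate.two_two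
    (hf.memLp_restrict_Ioc _ 0 1) (hg.memLp_restrict_Ioc _ 0 1)
  simp only [rpow_two] at hholder
  calc ‖∫ x in (0 : ℝ)..1, ((x : ℂ) - 1 / 2) * (f x * conj (g x))‖
      ≤ ∫ x in (0 : ℝ)..1, ‖((x : ℂ) - 1 / 2) * (f x * conj (g x))‖ :=
        intervalIntegral.norm_integral_le_integral_norm zero_le_one
    _ ≤ ∫ x in (0 : ℝ)..1, 1 / 2 * (‖f x‖ * ‖g x‖) := by
        refine intervalIntegral.integral_mono_on zero_le_one ?_ ?_ fun x hx ↦ ?_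
        · exact (by fun_prop : Continuous _).intervalIntegrable 0 1
        · exact (by fun_prop : Continuous _).intervalIntegrable 0 1
        · rw [norm_mul, norm_mul, RCLike.norm_conj]
          gcongr
          exact hsaw x hx
    _ ≤ 1 / 2 * (∫ x in (0 : ℝ)..1, ‖f x‖ ^ 2) ^ ((1 : ℝ) / 2) *
        (∫ x in (0 : ℝ)..1, ‖g x‖ ^ 2) ^ ((1 : ℝ) / 2) := by
        rw [intervalIntegral.integral_const_mul]
        simp only [intervalIntegral.integral_of_le zero_le_one, mul_assoc]
        gcongr

lemma norm_hilbertForm_le (s : Finset ℕ) (a b : ℕ → ℂ) :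
    ‖hilbertForm s a b‖ ≤
      π * (∑ n ∈ s, ‖a n‖ ^ 2) ^ ((1 : ℝ) / 2) * (∑ n ∈ s, ‖b n‖ ^ 2) ^ ((1 : ℝ) / 2) := by
  have h2pi : ‖(2 * π * I : ℂ)‖ = 2 * π := by simp [abs_of_pos pi_pos]
  rw [hilbertForm_eq_integral, norm_mul, h2pi, ← integral_norm_sq_trigPoly s a,
    ← integral_norm_sq_trigPoly s b]
  calc 2 * π * ‖_‖ ≤ 2 * π * (1 / 2 * _ * _) := by
        gcongr
        exact norm_integral_sawtooth_mul_le (continuous_trigPoly s a) (continuous_trigPoly s b)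
    _ = _ := by ring

/-- **Hilbert's inequality** (Proposition 2.2 of the paper, first form). There is an absolute
constant `C > 0` such that for all `N ∈ ℕ` and complex numbers `a₁, …, a_N`, `b₁, …, b_N`,
`|Σ_{m,n ≤ N, m ≠ n} a_m conj(b_n)/(m - n)|
  ≤ C (Σ_{n ≤ N} |a_n|²)^{1/2} (Σ_{n ≤ N} |b_n|²)^{1/2}`. -/
theorem hilbert_inequality :
    ∃ C : ℝ, 0 < C ∧ ∀ (N : ℕ) (a b : ℕ → ℂ),
      ‖∑ m ∈ Finset.Icc 1 N, ∑ n ∈ Finset.Icc 1 N,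
          if m ≠ n then a m * (starRingEnd ℂ) (b n) / ((m : ℂ) - (n : ℂ)) else 0‖ ≤
        C * (∑ n ∈ Finset.Icc 1 N, ‖a n‖ ^ 2) ^ ((1 : ℝ) / 2) *
          (∑ n ∈ Finset.Icc 1 N, ‖b n‖ ^ 2) ^ ((1 : ℝ) / 2) :=
  ⟨π, pi_pos, fun N a b ↦ norm_hilbertForm_le (Icc 1 N) a b⟩
end

section
/- Let f be holomorphic on an open neighborhood of the closed unit disc |z| ≤ 1. Then for every real y, PV ∫_{0}^{2π} f(e^{ix}) / (1 − e^{i(y−x)}) dx = π f(e^{iy}), where PV denotes the Cauchy principal value at the singularity x = y (mod 2π). -/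
/-! With `w = e^{iy}` and `z = e^{ix}`, the integrand splits as
`f z / (1 - w / z) = z * dslope f w z + f w * (1 - w / z)⁻¹`.
The first term is continuous in `x`, and its integral over a full period is the contour integral
of the holomorphic function `dslope f w` round the unit circle, which vanishes by Cauchy's theorem;
so its integral over `[y + δ, y + 2π - δ]` tends to `0`. The kernel `K x = (1 - e^{i(y-x)})⁻¹`
satisfies `K x + K (2y + 2π - x) = 1`, so its integral over that symmetric interval is half the
interval's length, `π - δ`. -/

open Complex MeasureTheory Filter Topology Real Set Metric

theorem exp_I_mul_eq_circleMap (x : ℝ) : Complex.exp (I * x) = circleMap 0 1 x := by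
  simp [circleMap_zero, mul_comm]

theorem exp_I_mul_sub_eq_circleMap_div (x y : ℝ) :
    Complex.exp (I * (y - x)) = circleMap 0 1 y / circleMap 0 1 x := by
  rw [circleMap_zero_div, div_one, ← exp_I_mul_eq_circleMap, ofReal_sub]

theorem circleMap_ne_circleMap_of_lt_of_lt {c : ℂ} {R x y : ℝ} (hR : R ≠ 0) (hyx : y < x)
    (hxy : x < y + 2 * π) : circleMap c R x ≠ circleMap c R y := fun h =>
  hyx.ne' (eq_of_circleMap_eq hR (by rw [abs_lt]; constructor <;> linarith [pi_pos]) h)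

theorem inv_one_sub_add_inv_one_sub_inv {K : Type*} [Field K] {a : K} (h0 : a ≠ 0) (h1 : a ≠ 1) :
    (1 - a)⁻¹ + (1 - a⁻¹)⁻¹ = 1 := by
  have : 1 - a ≠ 0 := sub_ne_zero.2 h1.symm
  have : a - 1 ≠ 0 := sub_ne_zero.2 h1
  field_simp
  ring

theorem div_one_sub_div_eq_mul_dslope_add {𝕜 : Type*} [NontriviallyNormedField 𝕜] (f : 𝕜 → 𝕜)
    {z w : 𝕜} (hz : z ≠ 0) (hzw : z ≠ w) :
    f z / (1 - w / z) = z * dslope f w z + f w * (1 - w / z)⁻¹ := by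
  have : z - w ≠ 0 := sub_ne_zero.2 hzw
  rw [dslope_of_ne f hzw, slope_def_field]
  field_simp
  ring

theorem intervalIntegral.integral_eq_half_smul_of_add_comp_reflect {E : Type*}
    [NormedAddCommGroup E] [NormedSpace ℝ E] [CompleteSpace E] {K : ℝ → E} {a b : ℝ} {c : E}
    (hK : IntervalIntegrable K volume a b) (h : ∀ x ∈ uIcc a b, K x + K (a + b - x) = c) :
    ∫ x in a..b, K x = (2⁻¹ * (b - a)) • c := by
  have hrefl : ∫ x in a..b, K (a + b - x) = (b - a) • c - ∫ x in a..b, K x := by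
    rw [intervalIntegral.integral_congr fun x hx => (eq_sub_of_add_eq' (h x hx)),
      intervalIntegral.integral_sub intervalIntegrable_const hK, intervalIntegral.integral_const]
  rw [intervalIntegral.integral_comp_sub_left, add_sub_cancel_right, add_sub_cancel_left,
    eq_sub_iff_add_eq, ← two_smul ℝ] at hrefl
  rw [mul_smul, ← hrefl, smul_smul, inv_mul_cancel₀ two_ne_zero, one_smul]

theorem DiffContOnCl.integral_circleMap_smul_eq_zero {E : Type*} [NormedAddCommGroup E]
    [NormedSpace ℂ E] {g : ℂ → E} {c : ℂ} {R : ℝ} (hR : 0 ≤ R) (hg : DiffContOnCl ℂ g (ball c R))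
    (t : ℝ) : ∫ x in t..t + 2 * π, circleMap 0 R x • g (circleMap c R x) = 0 := by
  have hper : Function.Periodic (fun x => circleMap 0 R x • g (circleMap c R x)) (2 * π) :=
    fun x => by simp only [periodic_circleMap _ _ x]
  have h := hg.circleIntegral_eq_zero hR
  simp only [circleIntegral, deriv_circleMap, mul_comm (circleMap 0 R _) I, mul_smul] at h
  rw [intervalIntegral.integral_smul, smul_eq_zero, or_iff_right I_ne_zero] at h
  rw [hper.intervalIntegral_add_eq t 0, zero_add, h]

theorem continuous_integral_add_sub {E : Type*} [NormedAddCommGroup E] [NormedSpace ℝ E]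
    {G : ℝ → E} (hG : Continuous G) (a b : ℝ) :
    Continuous fun δ => ∫ x in (a + δ)..(b - δ), G x := by
  have h : (fun δ => ∫ x in (a + δ)..(b - δ), G x) =
      fun δ => (∫ x in a..(b - δ), G x) - ∫ x in a..(a + δ), G x := funext fun δ =>
    (intervalIntegral.integral_interval_sub_left (hG.intervalIntegrable _ _)
      (hG.intervalIntegrable _ _)).symm
  rw [h]
  fun_prop

theorem uIcc_add_sub_subset_Ioo {y δ : ℝ} (h0 : 0 < δ) (hπ : δ ≤ π) :
    uIcc (y + δ) (y + 2 * π - δ) ⊆ Ioo y (y + 2 * π) := by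
  rw [uIcc_of_le (by linarith)]
  exact Icc_subset_Ioo (by linarith) (by linarith)

theorem circleMap_div_circleMap_ne_one {x y : ℝ} (hx : x ∈ Ioo y (y + 2 * π)) :
    circleMap 0 1 y / circleMap 0 1 x ≠ 1 := by
  rw [Ne, div_eq_one_iff_eq (circleMap_ne_center one_ne_zero)]
  exact (circleMap_ne_circleMap_of_lt_of_lt one_ne_zero hx.1 hx.2).symm

theorem continuousOn_inv_one_sub_circleMap_div (y : ℝ) :
    ContinuousOn (fun x : ℝ => (1 - circleMap 0 1 y / circleMap 0 1 x)⁻¹) (Ioo y (y + 2 * π)) :=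
  ContinuousOn.inv₀ (continuous_const.sub (continuous_const.div (continuous_circleMap 0 1)
    fun _ => circleMap_ne_center one_ne_zero)).continuousOn fun _ hx =>
    sub_ne_zero.2 (circleMap_div_circleMap_ne_one hx).symm

theorem integral_inv_one_sub_circleMap_div (y : ℝ) {δ : ℝ} (h0 : 0 < δ) (hπ : δ ≤ π) :
    ∫ x in (y + δ)..(y + 2 * π - δ), (1 - circleMap 0 1 y / circleMap 0 1 x)⁻¹ = π - δ := by
  have hsub := uIcc_add_sub_subset_Ioo (y := y) h0 hπ
  rw [intervalIntegral.integral_eq_half_smul_of_add_comp_reflect (c := 1)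
    ((continuousOn_inv_one_sub_circleMap_div y).mono hsub).intervalIntegrable]
  · rw [real_smul, mul_one]
    push_cast
    ring
  intro x hx
  have hreflect : circleMap 0 1 y / circleMap 0 1 (y + δ + (y + 2 * π - δ) - x) =
      (circleMap 0 1 y / circleMap 0 1 x)⁻¹ := by
    rw [inv_div, circleMap_zero_div, circleMap_zero_div,
      show y - (y + δ + (y + 2 * π - δ) - x) = x - y - 2 * π by ring,
      (periodic_circleMap 0 _).sub_eq]
  rw [hreflect]
  exact inv_one_sub_add_inv_one_sub_inv (div_ne_zero (circleMap_ne_center one_ne_zero)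
    (circleMap_ne_center one_ne_zero)) (circleMap_div_circleMap_ne_one (hsub hx))

theorem integral_div_one_sub_circleMap_div (f : ℂ → ℂ) {y δ : ℝ} (h0 : 0 < δ) (hπ : δ ≤ π)
    (hG : IntervalIntegrable
      (fun x => circleMap 0 1 x * dslope f (circleMap 0 1 y) (circleMap 0 1 x))
      volume (y + δ) (y + 2 * π - δ)) :
    ∫ x in (y + δ)..(y + 2 * π - δ), f (circleMap 0 1 x) / (1 - circleMap 0 1 y / circleMap 0 1 x) =
      (∫ x in (y + δ)..(y + 2 * π - δ),
        circleMap 0 1 x * dslope f (circleMap 0 1 y) (circleMap 0 1 x)) +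
      f (circleMap 0 1 y) * (π - δ) := by
  have hsub := uIcc_add_sub_subset_Ioo (y := y) h0 hπ
  rw [intervalIntegral.integral_congr fun x hx =>
      div_one_sub_div_eq_mul_dslope_add f (circleMap_ne_center one_ne_zero)
        (circleMap_ne_circleMap_of_lt_of_lt one_ne_zero (hsub hx).1 (hsub hx).2),
    intervalIntegral.integral_add hG
      ((((continuousOn_inv_one_sub_circleMap_div y).mono hsub).intervalIntegrable).const_mul _),
    intervalIntegral.integral_const_mul, integral_inv_one_sub_circleMap_div y h0 hπ]

/-- **Principal-value reproducing property of the Cauchy kernel on the unit circle**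
(Sec. 5 of the paper). If `f` is holomorphic on an open neighbourhood of the closed unit
disc, then for every real `y`,
`PV ∫_{0}^{2π} f(e^{ix})/(1 - e^{i(y-x)}) dx = π f(e^{iy})`, the principal value being the
limit, as `δ → 0⁺`, of the integral over a full period with the symmetric interval of radius
`δ` about the singular point `x ≡ y (mod 2π)` removed; by `2π`-periodicity of the integrand
this is the limit of `∫_{y+δ}^{y+2π-δ}`. -/
theorem circle_principal_value_reproduces (f : ℂ → ℂ) (U : Set ℂ) (hUopen : IsOpen U)
    (hUdisc : Metric.closedBall (0 : ℂ) 1 ⊆ U) (hhol : DifferentiableOn ℂ f U) (y : ℝ) :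
    Tendsto
      (fun δ : ℝ =>
        ∫ x in (y + δ)..(y + 2 * Real.pi - δ),
          f (Complex.exp (Complex.I * x)) / (1 - Complex.exp (Complex.I * (y - x))))
      (𝓝[>] 0) (𝓝 (Real.pi * f (Complex.exp (Complex.I * y)))) := by
  simp_rw [exp_I_mul_sub_eq_circleMap_div, exp_I_mul_eq_circleMap]
  set w := circleMap 0 1 y
  have hdslope : DifferentiableOn ℂ (dslope f w) U := (differentiableOn_dslope
    (hUopen.mem_nhds (hUdisc (circleMap_mem_closedBall 0 zero_le_one y)))).2 hhol
  have hG : Continuous fun x => circleMap 0 1 x * dslope f w (circleMap 0 1 x) :=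
    (continuous_circleMap 0 1).mul (hdslope.continuousOn.comp_continuous
      (continuous_circleMap 0 1) fun x => hUdisc (circleMap_mem_closedBall 0 zero_le_one x))
  have hcauchy : ∫ x in y..y + 2 * π, circleMap 0 1 x * dslope f w (circleMap 0 1 x) = 0 :=
    (hdslope.diffContOnCl_ball hUdisc).integral_circleMap_smul_eq_zero zero_le_one y
  have hlim : Tendsto (fun δ : ℝ => (∫ x in (y + δ)..(y + 2 * π - δ),
      circleMap 0 1 x * dslope f w (circleMap 0 1 x)) + f w * (π - δ)) (𝓝 0) (𝓝 (π * f w)) := by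
    refine ((continuous_integral_add_sub hG y (y + 2 * π)).add (by fun_prop)).tendsto' 0 _ ?_
    simp only [Pi.add_apply, add_zero, sub_zero, hcauchy, ofReal_zero, zero_add]
    exact mul_comm _ _
  refine (hlim.mono_left nhdsWithin_le_nhds).congr' ?_
  filter_upwards [Ioc_mem_nhdsGT pi_pos] with δ hδ
  exact (integral_div_one_sub_circleMap_div f hδ.1 hδ.2 (hG.intervalIntegrable _ _)).symm
end
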